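/- arXiv:2303.04392 — 8 statements merged into one kernel-verified Lean document; each statement's English description precedes it below -/
import Mathlib

section
/- For 0 < p < 1/2 and q = 1 - p, the quantity (1/q)·log₂(2q) is strictly less than C₂ = log₂(q/p). -/
theorem bsc_B_lt_C2 (p q C₂ : ℝ)
    (hp0 : 0 < p) (hp2 : p < 1/2) (hq : q = 1 - p)
    (hC2 : C₂ = Real.logb 2 (q/p)) :
    (1/q) * Real.logb 2 (2*q) < C₂ := by
  have hq2 : (1:ℝ)/2 < q := by rw [hq]; linarith
  have hq0 : 0 < q := by linarith
  have hpq : p < q := by linarith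
  -- key: log (2q) < q * log (q/p)
  have h1 : Real.log (2*q) < 2*q - 1 :=
    Real.log_lt_sub_one_of_pos (by linarith) (by intro h; linarith)
  have h2 : Real.log (p/q) < p/q - 1 :=
    Real.log_lt_sub_one_of_pos (by positivity) (by
      intro h
      have : p = q := by field_simp at h; linarith
      linarith)
  have h3 : Real.log (p/q) = - Real.log (q/p) := by
    rw [show p/q = (q/p)⁻¹ by field_simp, Real.log_inv]
  have h4 : 1 - p/q < Real.log (q/p) := by rw [h3] at h2; linarith
  have h5 : q - p < q * Real.log (q/p) := by
    have := mul_lt_mul_of_pos_left h4 hq0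
    have hqp : q * (1 - p/q) = q - p := by field_simp
    linarith [hqp ▸ this]
  have hkey : Real.log (2*q) < q * Real.log (q/p) := by
    have : 2*q - 1 = q - p := by linarith
    linarith
  have hlog2 : (0:ℝ) < Real.log 2 := Real.log_pos (by norm_num)
  rw [hC2, Real.logb, Real.logb]
  have hql : 0 < q * Real.log 2 := by positivity
  calc (1/q) * (Real.log (2*q) / Real.log 2)
      = Real.log (2*q) / (q * Real.log 2) := by ring
    _ < (q * Real.log (q/p)) / (q * Real.log 2) := by
        exact (div_lt_div_iff_of_pos_right hql).mpr hkey
    _ = Real.log (q/p) / Real.log 2 := by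
        rw [mul_div_mul_left _ _ (ne_of_gt hq0)]
end

section
/- For 0 < p < 1/2 and q = 1 - p, the BSC capacity C satisfies 2·ln(2)·C ≥ (q - p)². Consequently C - (q-p)²/3 ≥ ((3 - 2·ln 2)/(6·ln 2))·(q - p)² > 0 whenever p ≠ 1/2. -/
/-!
With `t = q - p = 1 - 2p` one has `(ln 2) C = ln 2 - H(p)`, where `H` is the binary entropy in
nats. The function `H(p) + (1 - 2p)² / 2` is increasing on `[0, 1/2]`: its derivative is
`ln((1 + t) / (1 - t)) - 2t`, which is nonnegative because
`ln((1 + t) / (1 - t)) = 2 ∑ t^(2k+1) / (2k+1)` has nonnegative terms. Its value at `1/2` is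
`ln 2`, which gives `2 (ln 2) C ≥ t²`. The other two claims follow from `ln 2 < 3/2`.
-/

open Real Set

theorem two_mul_le_log_one_add_sub_log_one_sub {x : ℝ} (hx₀ : 0 ≤ x) (hx₁ : x < 1) :
    2 * x ≤ log (1 + x) - log (1 - x) := by
  have h := hasSum_log_sub_log_of_abs_lt_one (abs_lt.mpr ⟨by linarith, hx₁⟩)
  simpa using le_hasSum h 0 fun k _ ↦ by positivity

theorem two_mul_one_sub_two_mul_le_log_one_sub_sub_log {p : ℝ} (hp₀ : 0 < p)
    (hp : p ≤ 2⁻¹) : 2 * (1 - 2 * p) ≤ log (1 - p) - log p := by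
  have h := two_mul_le_log_one_add_sub_log_one_sub (x := 1 - 2 * p) (by linarith) (by linarith)
  have h₁ : 1 + (1 - 2 * p) = 2 * (1 - p) := by ring
  have h₂ : 1 - (1 - 2 * p) = 2 * p := by ring
  rwa [h₁, h₂, log_mul two_ne_zero (by linarith), log_mul two_ne_zero hp₀.ne',
    add_sub_add_left_eq_sub] at h

theorem binEntropy_add_sq_monotoneOn :
    MonotoneOn (fun p ↦ binEntropy p + (1 - 2 * p) ^ 2 / 2) (Icc 0 2⁻¹) := by
  refine monotoneOn_of_hasDerivWithinAt_nonneg (convex_Icc 0 2⁻¹) (by fun_prop)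
    (f' := fun p ↦ log (1 - p) - log p - 2 * (1 - 2 * p)) (fun p hp ↦ ?_) (fun p hp ↦ ?_)
  all_goals rw [interior_Icc] at hp
  · have hsq : HasDerivAt (fun x ↦ (1 - 2 * x) ^ 2 / 2) (-2 * (1 - 2 * p)) p :=
      ((((hasDerivAt_id' p).const_mul 2).const_sub 1).pow 2).div_const 2 |>.congr_deriv (by ring)
    exact ((hasDerivAt_binEntropy hp.1.ne' (by linarith [hp.2])).add hsq).hasDerivWithinAt
      |>.congr_deriv (by ring)
  · linarith [two_mul_one_sub_two_mul_le_log_one_sub_sub_log hp.1 hp.2.le]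

theorem sq_one_sub_two_mul_div_two_le_log_two_sub_binEntropy {p : ℝ} (hp₀ : 0 ≤ p)
    (hp₁ : p ≤ 1) : (1 - 2 * p) ^ 2 / 2 ≤ log 2 - binEntropy p := by
  wlog hp : p ≤ 2⁻¹ generalizing p
  · have := this (p := 1 - p) (by linarith) (by linarith) (by linarith)
    rw [binEntropy_one_sub] at this
    linarith
  have := binEntropy_add_sq_monotoneOn ⟨hp₀, hp⟩ ⟨by norm_num, le_rfl⟩ hp
  simp only [binEntropy_two_inv] at this
  linarith

theorem log_two_mul_one_add_mul_logb_add_mul_logb (p : ℝ) :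
    log 2 * (1 + p * logb 2 p + (1 - p) * logb 2 (1 - p)) = log 2 - binEntropy p := by
  have : log 2 ≠ 0 := (log_pos one_lt_two).ne'
  simp only [logb, binEntropy, log_inv]
  field_simp
  ring

theorem bsc_capacity_quadratic_lb (p q C : ℝ)
    (hp0 : 0 < p) (hp2 : p < 1/2) (hq : q = 1 - p)
    (hC : C = 1 + p * Real.logb 2 p + q * Real.logb 2 q) :
    2 * Real.log 2 * C ≥ (q - p)^2 ∧
    C - (q - p)^2 / 3 ≥ ((3 - 2 * Real.log 2) / (6 * Real.log 2)) * (q - p)^2 ∧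
    0 < ((3 - 2 * Real.log 2) / (6 * Real.log 2)) * (q - p)^2 := by
  have hlog2 : 0 < log 2 := log_pos one_lt_two
  have hgap : q - p = 1 - 2 * p := by rw [hq]; ring
  have hcap : 2 * log 2 * C ≥ (q - p) ^ 2 := by
    have := sq_one_sub_two_mul_div_two_le_log_two_sub_binEntropy hp0.le (by linarith)
    rw [hC, hq, mul_assoc, log_two_mul_one_add_mul_logb_add_mul_logb, ← hq, hgap]
    linarith
  have hconst : (3 - 2 * log 2) / (6 * log 2) * (q - p) ^ 2 =
      (q - p) ^ 2 / (2 * log 2) - (q - p) ^ 2 / 3 := by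
    field_simp
    ring
  refine ⟨hcap, ?_, ?_⟩
  · rw [hconst, ge_iff_le, sub_le_sub_iff_right, div_le_iff₀ (by positivity), mul_comm]
    exact hcap
  · have : 0 < 3 - 2 * log 2 := by linarith [log_two_lt_d9]
    have : q - p ≠ 0 := by rw [hgap]; linarith
    positivity
end

section
/- Let ρ₁ ≥ ρ₂ ≥ ... ≥ ρ_M ≥ 0 with ∑ᵢ ρᵢ = 1 and M ≥ 2. Let m' be the smallest index such that ∑_{i≤m'} ρᵢ ≥ 1/2. Define m = m' - 1 if ∑_{i≤m'} ρᵢ - 1/2 > ρ_{m'}/2, and m = m' otherwise. Then with P₀ = ∑_{i≤m} ρᵢ and Δ = 2·P₀ - 1, we have |Δ| ≤ ρ_{m'} ≤ ρ₁, and both index sets {1,...,m} and {m+1,...,M} are nonempty. -/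
/-!
With `A` the mass strictly before the threshold atom `r = ρ (m' - 1)`, we have
`A < 1/2 ≤ A + r`; the rule cuts before or after that atom, whichever side of `1/2` is closer,
so `|2 P₀ - 1| ≤ r`. Neither side is empty: cutting before the first atom would force `ρ 0 > 1`,
and keeping every atom would force `ρ (M - 1) ≥ 1`, impossible since
`ρ (M - 1) ≤ ρ (M - 2)` and `ρ (M - 2) + ρ (M - 1) ≤ 1`.
-/

open Finset

lemma le_one_of_sum_range_eq_one {M : ℕ} {ρ : ℕ → ℝ} (hnn : ∀ i, i < M → 0 ≤ ρ i)
    (hsum : ∑ i ∈ range M, ρ i = 1) {i : ℕ} (hi : i < M) : ρ i ≤ 1 :=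
  hsum ▸ single_le_sum (fun j hj => hnn j (mem_range.1 hj)) (mem_range.2 hi)

lemma two_mul_le_one_of_sum_range_eq_one {M : ℕ} {ρ : ℕ → ℝ}
    (hmono : ∀ i j, i ≤ j → j < M → ρ j ≤ ρ i) (hnn : ∀ i, i < M → 0 ≤ ρ i)
    (hsum : ∑ i ∈ range M, ρ i = 1) {i : ℕ} (hi₁ : 1 ≤ i) (hi : i < M) : 2 * ρ i ≤ 1 := by
  have hpair : ρ (i - 1) + ρ i ≤ 1 := by
    rw [← hsum, ← sum_pair (by omega : i - 1 ≠ i)]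
    refine sum_le_sum_of_subset_of_nonneg ?_ fun j hj _ => hnn j (mem_range.1 hj)
    intro j
    simp only [mem_insert, mem_singleton, mem_range]
    omega
  linarith [hmono (i - 1) i (by omega) hi]

theorem top_rule_satisfies_sead (M : ℕ) (ρ : ℕ → ℝ) (m' m : ℕ) (P₀ Δ : ℝ)
    (hM : 2 ≤ M)
    (hmono : ∀ i j, i ≤ j → j < M → ρ j ≤ ρ i)
    (hnn : ∀ i, i < M → 0 ≤ ρ i)
    (hsum : ∑ i ∈ Finset.range M, ρ i = 1)
    (hm'1 : 1 ≤ m') (hm'M : m' ≤ M)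
    (hge : 1/2 ≤ ∑ i ∈ Finset.range m', ρ i)
    (hmin : ∀ k, k < m' → ∑ i ∈ Finset.range k, ρ i < 1/2)
    (hm : m = if (∑ i ∈ Finset.range m', ρ i) - 1/2 > ρ (m'-1) / 2 then m' - 1 else m')
    (hP0 : P₀ = ∑ i ∈ Finset.range m, ρ i)
    (hΔ : Δ = 2 * P₀ - 1) :
    |Δ| ≤ ρ (m'-1) ∧ ρ (m'-1) ≤ ρ 0 ∧ 1 ≤ m ∧ m < M := by
  obtain ⟨k, rfl⟩ : ∃ k, m' = k + 1 := ⟨m' - 1, by omega⟩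
  simp only [Nat.add_sub_cancel, sum_range_succ] at hm hge ⊢
  have hk : k < M := by omega
  have hA : ∑ i ∈ range k, ρ i < 1 / 2 := hmin k k.lt_succ_self
  have hρk : ρ k ≤ ρ 0 := hmono 0 k k.zero_le hk
  split_ifs at hm with hc
  · have hk₀ : k ≠ 0 := by
      rintro rfl
      simp only [range_zero, sum_empty, zero_add] at hc
      linarith [le_one_of_sum_range_eq_one hnn hsum hk]
    subst hm hP0 hΔ
    exact ⟨abs_le.2 ⟨by linarith, by linarith⟩, hρk, by omega, by omega⟩
  · have hkM : k + 1 ≠ M := by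
      rintro rfl
      linarith [two_mul_le_one_of_sum_range_eq_one hmono hnn hsum (by omega) hk,
        sum_range_succ ρ k]
    subst hm hP0 hΔ
    rw [sum_range_succ]
    exact ⟨abs_le.2 ⟨by linarith, by linarith⟩, hρk, by omega, by omega⟩
end

section
/- Suppose ρ ∈ (0,1), Δ ∈ ℝ with Δ ≥ 2ρ - 1 + 2λ for some λ ≥ 0 (i.e., there is another element of posterior λ in S₀ along with j). Then for 0 < p < 1/2, q = 1-p: log₂(2q) - log₂(1 + (q-p)·(Δ-ρ)/(1-ρ)) < C₂ = log₂(q/p) whenever λ > 0, and equality holds iff Δ = 2ρ - 1 (the singleton case). -/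
/-!
Since `q / p = 2q / (2p)`, the step `log₂ (2q) - log₂ X` is below `C₂` exactly when `X > 2p`, and
equals it exactly when `X = 2p`. Writing `X = 2p + (q - p)(Δ - (2ρ - 1)) / (1 - ρ)` shows that
`X ≥ 2p`, with equality only in the singleton case `Δ = 2ρ - 1`.
-/

open Real

namespace Real

variable {b c p q x : ℝ}

theorem logb_mul_sub_logb_div (hc : c ≠ 0) (hp : p ≠ 0) (hq : q ≠ 0) :
    logb b (c * q) - logb b (q / p) = logb b (c * p) := by
  rw [← logb_div (by positivity) (by positivity)]
  congr 1
  field_simp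

theorem logb_mul_sub_logb_lt_logb_div_iff (hb : 1 < b) (hc : 0 < c) (hp : 0 < p) (hq : 0 < q)
    (hx : 0 < x) : logb b (c * q) - logb b x < logb b (q / p) ↔ c * p < x := by
  rw [← logb_lt_logb_iff hb (by positivity) hx,
    ← logb_mul_sub_logb_div (b := b) hc.ne' hp.ne' hq.ne']
  constructor <;> intro h <;> linarith

theorem logb_mul_sub_logb_eq_logb_div_iff (hb : 1 < b) (hc : 0 < c) (hp : 0 < p) (hq : 0 < q)
    (hx : 0 < x) : logb b (c * q) - logb b x = logb b (q / p) ↔ x = c * p := by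
  rw [← logb_injOn_pos hb |>.eq_iff hx (show 0 < c * p by positivity),
    ← logb_mul_sub_logb_div (b := b) hc.ne' hp.ne' hq.ne']
  constructor <;> intro h <;> linarith

end Real

theorem one_add_mul_div_eq_two_mul_add {p q ρ Δ : ℝ} (hpq : p + q = 1) (hρ : ρ ≠ 1) :
    1 + (q - p) * (Δ - ρ) / (1 - ρ) = 2 * p + (q - p) * (Δ - (2 * ρ - 1)) / (1 - ρ) := by
  have : 1 - ρ ≠ 0 := sub_ne_zero.mpr hρ.symm
  field_simp
  linear_combination (ρ - 1) * hpq

theorem nonsingleton_step_lt_C2_general (p q C₂ ρ lam Δ : ℝ)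
    (hp0 : 0 < p) (hp2 : p < 1/2) (hq : q = 1 - p)
    (hC2 : C₂ = Real.logb 2 (q/p))
    (hρ1 : ρ < 1) (hlam : 0 ≤ lam)
    (hΔ : Δ ≥ 2*ρ - 1 + 2*lam) :
    (0 < lam →
      Real.logb 2 (2*q) - Real.logb 2 (1 + (q-p) * (Δ - ρ) / (1 - ρ)) < C₂) ∧
    (Real.logb 2 (2*q) - Real.logb 2 (1 + (q-p) * (Δ - ρ) / (1 - ρ)) = C₂
      ↔ Δ = 2*ρ - 1) := by
  have hqp : 0 < q - p := by linarith
  have hρ : 0 < 1 - ρ := by linarith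
  rw [hC2, one_add_mul_div_eq_two_mul_add (by linarith) hρ1.ne]
  have hdev : 0 ≤ (q - p) * (Δ - (2 * ρ - 1)) / (1 - ρ) :=
    div_nonneg (mul_nonneg hqp.le (by linarith)) hρ.le
  have hX : 0 < 2 * p + (q - p) * (Δ - (2 * ρ - 1)) / (1 - ρ) := by linarith
  rw [logb_mul_sub_logb_eq_logb_div_iff one_lt_two two_pos hp0 (by linarith) hX]
  refine ⟨fun hlam_pos => ?_, ?_⟩
  · rw [logb_mul_sub_logb_lt_logb_div_iff one_lt_two two_pos hp0 (by linarith) hX]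
    have hdev_pos : 0 < (q - p) * (Δ - (2 * ρ - 1)) / (1 - ρ) :=
      div_pos (mul_pos hqp (by linarith)) hρ
    linarith
  · simp only [add_eq_left, div_eq_zero_iff, mul_eq_zero, hqp.ne', hρ.ne', sub_eq_zero,
      false_or, or_false]

theorem nonsingleton_step_lt_C2 (p q C₂ ρ lam Δ : ℝ)
    (hp0 : 0 < p) (hp2 : p < 1/2) (hq : q = 1 - p)
    (hC2 : C₂ = Real.logb 2 (q/p))
    (hρ0 : 0 < ρ) (hρ1 : ρ < 1) (hlam : 0 ≤ lam)
    (hΔ : Δ ≥ 2*ρ - 1 + 2*lam) :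
    (0 < lam →
      Real.logb 2 (2*q) - Real.logb 2 (1 + (q-p) * (Δ - ρ) / (1 - ρ)) < C₂) ∧
    (Real.logb 2 (2*q) - Real.logb 2 (1 + (q-p) * (Δ - ρ) / (1 - ρ)) = C₂
      ↔ Δ = 2*ρ - 1) :=
  nonsingleton_step_lt_C2_general p q C₂ ρ lam Δ hp0 hp2 hq hC2 hρ1 hlam hΔ
end

section
/- For p ∈ (0,1/2), q = 1-p, ρ ∈ (0,1] and α ∈ ℝ with 0 ≤ α ≤ 1 - 2ρ: (1-ρ)² - (q-p)²(ρ+α)² - 2pρ(1+α)(q-p)(ρ+α) ≥ (1-ρ)²·4p·(q - ρ(q-p)) > 0. -/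
theorem derivative_numerator_positive (p q ρ α : ℝ)
    (hp0 : 0 < p) (hp2 : p < 1/2) (hq : q = 1 - p)
    (hρ0 : 0 < ρ) (hρ1 : ρ ≤ 1) (hα0 : 0 ≤ α) (hα : α ≤ 1 - 2*ρ) :
    (1-ρ)^2 - (q-p)^2 * (ρ+α)^2 - 2*p*ρ*(1+α)*(q-p)*(ρ+α)
      ≥ (1-ρ)^2 * (4*p) * (q - ρ*(q-p)) ∧
    0 < (1-ρ)^2 * (4*p) * (q - ρ*(q-p)) := by
  subst hq
  have hρ2 : ρ ≤ 1/2 := by linarith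
  have hs : 0 ≤ 1 - 2*p := by linarith
  constructor
  · have key : 0 ≤ (1-2*p) * (1-2*ρ-α) *
        ((1-2*p)*((1-ρ)+(ρ+α)) + 2*p*ρ*((1-ρ)+(1-ρ)+(ρ+α))) := by
      apply mul_nonneg (mul_nonneg hs (by linarith))
      have : 0 ≤ (1-2*p)*((1-ρ)+(ρ+α)) := by
        apply mul_nonneg hs; linarith
      nlinarith [mul_pos hp0 hρ0]
    nlinarith [key]
  · have hone : ρ < 1 := by linarith
    have h1 : (0:ℝ) < (1-ρ)^2 := by nlinarith
    have h2 : (0:ℝ) < 1 - p - ρ*(1-p-p) := by nlinarith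
    have h3 : (0:ℝ) < (1-ρ)^2 * (4*p) := by nlinarith
    calc (0:ℝ) < (1-ρ)^2 * (4*p) * (1 - p - ρ*(1-p-p)) := mul_pos h3 h2
      _ = (1-ρ)^2 * (4*p) * (1 - p - ρ*(1-p-p)) := rfl
end

section
/- For p ∈ (0,1/2), q = 1-p and α ∈ [0,1), the function f(α) = log₂((1-α)/(1+α))·(1 - p/q) + 2·log₂(1 + (q-p)²·α) is nonincreasing on [0,1); equivalently its derivative satisfies -(2/q)·(q-p)/(1-α²) + 2(q-p)²/(1+(q-p)²α) ≤ -2p(q-p)(2 + 1/q) < 0 when p < 1/2. Consequently f(α) ≤ f(0) = 0 for all α ∈ [0,1). -/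
/-!
Write `c = 1 - p/q = (q-p)/q` and `a = (q-p)^2`. Then `f' (β) · log 2 = -2c/(1-β²) + 2a/(1+aβ)`,
and for `β ∈ [0,1)` the first term is at most `-2c` and the second at most `2a`, so
`f' · log 2 ≤ 2(a - c) = -2p(q-p)(2 + 1/q) < 0`. Hence `f` is antitone and
`f(α) ≤ f(0) = 0`.
-/

open Real Set

noncomputable def logRatioProfile (c a β : ℝ) : ℝ :=
  logb 2 ((1 - β) / (1 + β)) * c + 2 * logb 2 (1 + a * β)

namespace logRatioProfile

variable {c a β : ℝ}

@[simp]
lemma zero : logRatioProfile c a 0 = 0 := by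
  simp [logRatioProfile]

lemma hasDerivAt (hβ₀ : -1 < β) (hβ₁ : β < 1) (haβ : 0 < 1 + a * β) :
    HasDerivAt (logRatioProfile c a)
      ((-(2 * c) / (1 - β ^ 2) + 2 * a / (1 + a * β)) / log 2) β := by
  have hminus : 0 < 1 - β := by linarith
  have hplus : 0 < 1 + β := by linarith
  have hratio : HasDerivAt (fun x : ℝ => (1 - x) / (1 + x))
      ((-1 * (1 + β) - (1 - β) * 1) / (1 + β) ^ 2) β :=
    ((hasDerivAt_id' β).const_sub 1).div ((hasDerivAt_id' β).const_add 1) hplus.ne'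
  have hlinear : HasDerivAt (fun x : ℝ => 1 + a * x) (a * 1) β :=
    ((hasDerivAt_id' β).const_mul a).const_add 1
  have h := (((hratio.log (div_pos hminus hplus).ne').div_const (log 2)).mul_const c).add
    (((hlinear.log haβ.ne').div_const (log 2)).const_mul 2)
  unfold logRatioProfile
  simp only [logb]
  refine h.congr_deriv ?_
  have : (1 : ℝ) - β ^ 2 ≠ 0 := by nlinarith
  field_simp
  ring

lemma deriv_mul_log_two_le (hc : 0 ≤ c) (ha : 0 ≤ a) (hβ₀ : 0 ≤ β) (hβ₁ : β < 1) :
    -(2 * c) / (1 - β ^ 2) + 2 * a / (1 + a * β) ≤ 2 * (a - c) := by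
  have hsq : 0 < 1 - β ^ 2 := by nlinarith
  have hfirst : -(2 * c) / (1 - β ^ 2) ≤ -(2 * c) := by
    rw [div_le_iff₀ hsq]
    nlinarith [mul_nonneg hc (sq_nonneg β)]
  have hsecond : 2 * a / (1 + a * β) ≤ 2 * a :=
    div_le_self (by positivity) (by nlinarith [mul_nonneg ha hβ₀])
  linarith

lemma antitoneOn (hc : 0 ≤ c) (ha : 0 ≤ a) (hac : a ≤ c) :
    AntitoneOn (logRatioProfile c a) (Ico 0 1) := by
  have hderiv : ∀ β ∈ Ico (0 : ℝ) 1, HasDerivAt (logRatioProfile c a)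
      ((-(2 * c) / (1 - β ^ 2) + 2 * a / (1 + a * β)) / log 2) β :=
    fun β ⟨hβ₀, hβ₁⟩ => hasDerivAt (by linarith) hβ₁ (by nlinarith [mul_nonneg ha hβ₀])
  refine antitoneOn_of_hasDerivWithinAt_nonpos (convex_Ico 0 1)
    (fun β hβ => (hderiv β hβ).continuousAt.continuousWithinAt)
    (fun β hβ => (hderiv β (interior_subset hβ)).hasDerivWithinAt) fun β hβ => ?_
  obtain ⟨hβ₀, hβ₁⟩ := interior_subset hβ
  exact div_nonpos_of_nonpos_of_nonneg
    (by linarith [deriv_mul_log_two_le hc ha hβ₀ hβ₁]) (log_pos one_lt_two).le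

lemma nonpos (hc : 0 ≤ c) (ha : 0 ≤ a) (hac : a ≤ c) (hβ : β ∈ Ico (0 : ℝ) 1) :
    logRatioProfile c a β ≤ 0 :=
  zero (c := c) (a := a) ▸ antitoneOn hc ha hac ⟨le_rfl, one_pos⟩ hβ hβ.1

end logRatioProfile

theorem f_alpha_nonincreasing (p q α : ℝ)
    (hp0 : 0 < p) (hp2 : p < 1/2) (hq : q = 1 - p)
    (hα : α ∈ Set.Ico (0:ℝ) 1) :
    AntitoneOn (fun β : ℝ =>
        Real.logb 2 ((1-β)/(1+β)) * (1 - p/q)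
          + 2 * Real.logb 2 (1 + (q-p)^2 * β)) (Set.Ico 0 1) ∧
    (-(2/q) * (q-p) / (1 - α^2) + 2*(q-p)^2 / (1 + (q-p)^2 * α)
        ≤ -2*p*(q-p)*(2 + 1/q)) ∧
    (-2*p*(q-p)*(2 + 1/q) < 0) ∧
    (Real.logb 2 ((1-α)/(1+α)) * (1 - p/q)
        + 2 * Real.logb 2 (1 + (q-p)^2 * α) ≤ 0) := by
  subst hq
  have hq₀ : (0 : ℝ) < 1 - p := by linarith
  have hgap : 0 < 1 - p - p := by linarith
  have hc_eq : 1 - p / (1 - p) = (1 - p - p) / (1 - p) := by field_simp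
  have hc : 0 ≤ 1 - p / (1 - p) := hc_eq ▸ by positivity
  have ha : 0 ≤ (1 - p - p) ^ 2 := sq_nonneg _
  have hac : (1 - p - p) ^ 2 ≤ 1 - p / (1 - p) := by
    rw [hc_eq, le_div_iff₀ hq₀]
    nlinarith
  have hfirst : -(2 / (1 - p)) * (1 - p - p) = -(2 * (1 - p / (1 - p))) := by
    field_simp
  have hslope : 2 * ((1 - p - p) ^ 2 - (1 - p / (1 - p)))
      = -2 * p * (1 - p - p) * (2 + 1 / (1 - p)) := by
    field_simp
    ring
  refine ⟨logRatioProfile.antitoneOn hc ha hac, ?_, ?_,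
    logRatioProfile.nonpos hc ha hac hα⟩
  · rw [hfirst, ← hslope]
    exact logRatioProfile.deriv_mul_log_two_le hc ha hα.1 hα.2
  · have : 0 < p * (1 - p - p) * (2 + 1 / (1 - p)) := by positivity
    linarith
end

section
/- For p ∈ (0,1/2) and ρ ∈ [1/3, 1/2]: 1 - ρ - (q-p)(3ρ-1)(1 - ρ + 4pρ) ≥ p + ρ(1-2p)(1-4p)/2 > 0, where q = 1-p. Hence the function g(ρ) = log₂(ρ/(1-ρ))·(1-p/q) + (p/q)·log₂(1 - (q-p)²((3ρ-1)/(1-ρ))²) is increasing on [1/3, 1/2]. -/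
/-!
The difference of the two sides of the first inequality is `(1 - 2ρ)` times a function affine
in `ρ` that is nonnegative at `ρ = 1/3` and `ρ = 1/2`, hence on the whole interval. For the
monotonicity, with `c = q - p` and `V = (1 - r)² - c² (3r - 1)² > 0`, one computes
`g'(r) · log 2 = c (V - 4pc (3r - 1) r) / (q r (1 - r) V)`, and the same device applies to
`V - 4pc (3r - 1) r = p² + (1 - 2r) ((4p - 5p²) + (4 - 12p + 6p²) r)`.
-/

open Real Set

lemma affine_nonneg_of_nonneg_endpoints {a b s t x : ℝ} (hs : 0 ≤ a + b * s) (ht : 0 ≤ a + b * t)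
    (hx : x ∈ Icc s t) : 0 ≤ a + b * x := by
  rcases le_total 0 b with hb | hb
  · nlinarith [mul_le_mul_of_nonneg_left hx.1 hb]
  · nlinarith [mul_le_mul_of_nonpos_left hx.2 hb]

lemma lower_bound_le {p q ρ : ℝ} (hp₀ : 0 < p) (hp₂ : p < 1/2) (hq : q = 1 - p)
    (hρ : ρ ∈ Icc (1/3 : ℝ) (1/2)) :
    p + ρ * (1 - 2 * p) * (1 - 4 * p) / 2 ≤ 1 - ρ - (q - p) * (3 * ρ - 1) * (1 - ρ + 4 * p * ρ) := by
  subst hq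
  have hfactor := affine_nonneg_of_nonneg_endpoints (a := 2 - 3 * p)
    (b := -(3/2 * (1 - 2 * p) * (1 - 4 * p))) (by nlinarith) (by nlinarith) hρ
  have h : 1 - ρ - (1 - p - p) * (3 * ρ - 1) * (1 - ρ + 4 * p * ρ)
      - (p + ρ * (1 - 2 * p) * (1 - 4 * p) / 2)
      = (1 - 2 * ρ) * (2 - 3 * p + -(3/2 * (1 - 2 * p) * (1 - 4 * p)) * ρ) := by ring
  nlinarith [mul_nonneg (by linarith [hρ.2] : (0 : ℝ) ≤ 1 - 2 * ρ) hfactor]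

lemma lower_bound_pos {p ρ : ℝ} (hp₀ : 0 < p) (hρ : ρ ∈ Icc (0 : ℝ) (1/2)) :
    0 < p + ρ * (1 - 2 * p) * (1 - 4 * p) / 2 := by
  obtain ⟨hρ₀, hρ₁⟩ := hρ
  nlinarith [sq_nonneg (4 * p - 1), mul_nonneg hρ₀ (sub_nonneg.2 hρ₁)]

lemma hasDerivAt_log_div_one_sub {x : ℝ} (hx₀ : x ≠ 0) (hx₁ : x ≠ 1) :
    HasDerivAt (fun r => log (r / (1 - r))) (1 / (x * (1 - x))) x := by
  have h1x : 1 - x ≠ 0 := sub_ne_zero.2 hx₁.symm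
  have hu : HasDerivAt (fun r => r / (1 - r)) ((1 * (1 - x) - x * (-1)) / (1 - x) ^ 2) x :=
    (hasDerivAt_id x).div ((hasDerivAt_id x).const_sub 1) h1x
  convert hu.log (div_ne_zero hx₀ h1x) using 1
  field_simp
  ring

lemma hasDerivAt_log_one_sub_sq_mul {c x : ℝ} (hx₁ : x ≠ 1)
    (hV : (1 - x) ^ 2 - c ^ 2 * (3 * x - 1) ^ 2 ≠ 0) :
    HasDerivAt (fun r => log (1 - c ^ 2 * ((3 * r - 1) / (1 - r)) ^ 2))
      (-(4 * c ^ 2 * (3 * x - 1) / ((1 - x) * ((1 - x) ^ 2 - c ^ 2 * (3 * x - 1) ^ 2)))) x := by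
  have h1x : 1 - x ≠ 0 := sub_ne_zero.2 hx₁.symm
  have hv_eq : 1 - c ^ 2 * ((3 * x - 1) / (1 - x)) ^ 2
      = ((1 - x) ^ 2 - c ^ 2 * (3 * x - 1) ^ 2) / (1 - x) ^ 2 := by
    field_simp
  have hw : HasDerivAt (fun r => (3 * r - 1) / (1 - r))
      ((3 * 1 * (1 - x) - (3 * x - 1) * (-1)) / (1 - x) ^ 2) x :=
    (((hasDerivAt_id x).const_mul 3).sub_const 1).div ((hasDerivAt_id x).const_sub 1) h1x
  have hv : HasDerivAt (fun r => 1 - c ^ 2 * ((3 * r - 1) / (1 - r)) ^ 2)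
      (-(c ^ 2 * (2 * ((3 * x - 1) / (1 - x)) ^ 1
        * ((3 * 1 * (1 - x) - (3 * x - 1) * (-1)) / (1 - x) ^ 2)))) x :=
    ((hw.pow 2).const_mul (c ^ 2)).const_sub 1
  convert hv.log (by rw [hv_eq]; exact div_ne_zero hV (pow_ne_zero 2 h1x)) using 1
  rw [hv_eq]
  field_simp
  ring

lemma sq_sub_sq_mul_pos {c x : ℝ} (hc : c ^ 2 < 1) (hx : x ∈ Icc (1/3 : ℝ) (1/2)) :
    0 < (1 - x) ^ 2 - c ^ 2 * (3 * x - 1) ^ 2 := by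
  obtain ⟨hx₁, hx₂⟩ := hx
  have h : (3 * x - 1) ^ 2 ≤ (1 - x) ^ 2 := by nlinarith
  nlinarith [mul_le_mul_of_nonneg_left h (sq_nonneg c)]

lemma hasDerivAt_g {p q x : ℝ} (hx₀ : x ≠ 0) (hx₁ : x ≠ 1)
    (hV : (1 - x) ^ 2 - (q - p) ^ 2 * (3 * x - 1) ^ 2 ≠ 0) :
    HasDerivAt (fun r : ℝ => logb 2 (r / (1 - r)) * (1 - p / q)
        + (p / q) * logb 2 (1 - (q - p) ^ 2 * ((3 * r - 1) / (1 - r)) ^ 2))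
      (1 / (x * (1 - x)) / log 2 * (1 - p / q) + p / q *
        (-(4 * (q - p) ^ 2 * (3 * x - 1) / ((1 - x) * ((1 - x) ^ 2 - (q - p) ^ 2 * (3 * x - 1) ^ 2)))
          / log 2)) x :=
  (((hasDerivAt_log_div_one_sub hx₀ hx₁).div_const (log 2)).mul_const (1 - p / q)).add
    (((hasDerivAt_log_one_sub_sq_mul hx₁ hV).div_const (log 2)).const_mul (p / q))

lemma deriv_g_pos {p q x : ℝ} (hpq : p < q) (hq : 0 < q) (hx₀ : 0 < x) (hx₁ : x < 1)
    (hV : 0 < (1 - x) ^ 2 - (q - p) ^ 2 * (3 * x - 1) ^ 2)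
    (hN : 0 < (1 - x) ^ 2 - (q - p) ^ 2 * (3 * x - 1) ^ 2 - 4 * p * (q - p) * (3 * x - 1) * x) :
    0 < 1 / (x * (1 - x)) / log 2 * (1 - p / q) + p / q *
        (-(4 * (q - p) ^ 2 * (3 * x - 1) / ((1 - x) * ((1 - x) ^ 2 - (q - p) ^ 2 * (3 * x - 1) ^ 2)))
          / log 2) := by
  set V := (1 - x) ^ 2 - (q - p) ^ 2 * (3 * x - 1) ^ 2
  have hlog : 0 < log 2 := log_pos one_lt_two
  have h1x : 0 < 1 - x := sub_pos.2 hx₁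
  have hqp : 0 < q - p := sub_pos.2 hpq
  have key : 1 / (x * (1 - x)) / log 2 * (1 - p / q) + p / q *
        (-(4 * (q - p) ^ 2 * (3 * x - 1) / ((1 - x) * V)) / log 2)
      = (q - p) * (V - 4 * p * (q - p) * (3 * x - 1) * x) / (q * x * (1 - x) * V * log 2) := by
    field_simp
    ring
  rw [key]
  have := mul_pos hqp hN
  positivity

lemma deriv_numerator_pos {p q x : ℝ} (hp₀ : 0 < p) (hp₂ : p < 1/2) (hq : q = 1 - p)
    (hx : x ∈ Icc (1/3 : ℝ) (1/2)) :
    0 < (1 - x) ^ 2 - (q - p) ^ 2 * (3 * x - 1) ^ 2 - 4 * p * (q - p) * (3 * x - 1) * x := by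
  subst hq
  have hfactor := affine_nonneg_of_nonneg_endpoints (a := 4 * p - 5 * p ^ 2)
    (b := 4 - 12 * p + 6 * p ^ 2) (by nlinarith) (by nlinarith) hx
  have h : (1 - x) ^ 2 - (1 - p - p) ^ 2 * (3 * x - 1) ^ 2 - 4 * p * (1 - p - p) * (3 * x - 1) * x
      = p ^ 2 + (1 - 2 * x) * (4 * p - 5 * p ^ 2 + (4 - 12 * p + 6 * p ^ 2) * x) := by ring
  nlinarith [mul_nonneg (by linarith [hx.2] : (0 : ℝ) ≤ 1 - 2 * x) hfactor]

theorem g_rho_increasing (p q ρ : ℝ)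
    (hp0 : 0 < p) (hp2 : p < 1/2) (hq : q = 1 - p)
    (hρ : ρ ∈ Set.Icc (1/3 : ℝ) (1/2)) :
    (1 - ρ - (q-p)*(3*ρ-1)*(1 - ρ + 4*p*ρ) ≥ p + ρ*(1-2*p)*(1-4*p)/2) ∧
    (0 < p + ρ*(1-2*p)*(1-4*p)/2) ∧
    StrictMonoOn (fun r : ℝ =>
        Real.logb 2 (r/(1-r)) * (1 - p/q)
          + (p/q) * Real.logb 2 (1 - (q-p)^2 * ((3*r-1)/(1-r))^2))
      (Set.Icc (1/3 : ℝ) (1/2)) := by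
  refine ⟨lower_bound_le hp0 hp2 hq hρ, lower_bound_pos hp0 ⟨by linarith [hρ.1], hρ.2⟩, ?_⟩
  have hc : (q - p) ^ 2 < 1 := by subst hq; nlinarith
  have hV : ∀ x ∈ Icc (1/3 : ℝ) (1/2), 0 < (1 - x) ^ 2 - (q - p) ^ 2 * (3 * x - 1) ^ 2 :=
    fun x hx => sq_sub_sq_mul_pos hc hx
  have hderiv : ∀ x ∈ Icc (1/3 : ℝ) (1/2), HasDerivAt _ _ x := fun x hx =>
    hasDerivAt_g (p := p) (q := q) (by linarith [hx.1]) (by linarith [hx.2]) (hV x hx).ne'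
  refine strictMonoOn_of_hasDerivWithinAt_pos (convex_Icc _ _)
    (fun x hx => (hderiv x hx).continuousAt.continuousWithinAt)
    (fun x hx => (hderiv x (interior_subset hx)).hasDerivWithinAt) fun x hx => ?_
  have hx := interior_subset hx
  exact deriv_g_pos (by linarith) (by linarith) (by linarith [hx.1]) (by linarith [hx.2])
    (hV x hx) (deriv_numerator_pos hp0 hp2 hq hx)
end

section
/- Let Ω = {0,1}^K with the uniform distribution. For each t ∈ {1,...,K}, partition Ω by the t-th bit: S₀ = {i : bit t of i is 0}, S₁ = {i : bit t of i is 1}. Then after conditioning sequentially on any fixed values of the BSC posterior updates for bits 1,...,t-1, each of S₀ and S₁ has total posterior probability exactly 1/2 at step t; in particular the induced transmission is systematic (the transmitted symbol at time t equals bit t of the message θ). -/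
/-! The posterior weight of a message after the first `t` channel uses depends only on its
bits before `t`. Flipping bit `t` is therefore a weight-preserving bijection between `S₀` and
`S₁`, so the two halves carry equal mass. -/

open Finset

theorem prod_update_eq_of_notMem {ι γ N : Type*} [DecidableEq ι] [CommMonoid N]
    (s : Finset ι) (i : ι → γ) (g : ι → γ → N) {t : ι} (ht : t ∉ s) (c : γ) :
    ∏ j ∈ s, g j (Function.update i t c j) = ∏ j ∈ s, g j (i j) :=
  prod_congr rfl fun j hj => by rw [Function.update_of_ne (ne_of_mem_of_not_mem hj ht)]

theorem sum_filter_apply_eq_of_update_invariant {ι β M : Type*} [Fintype ι] [DecidableEq ι]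
    [Fintype β] [DecidableEq β] [AddCommMonoid M] (f : (ι → β) → M) (t : ι)
    (hf : ∀ i c, f (Function.update i t c) = f i) (b c : β) :
    ∑ i ∈ univ.filter (fun i => i t = b), f i = ∑ i ∈ univ.filter (fun i => i t = c), f i := by
  refine sum_nbij' (fun i => Function.update i t c) (fun i => Function.update i t b)
    (by simp) (by simp) ?_ ?_ (fun i _ => (hf i c).symm)
  all_goals
    intro i hi
    simp only [mem_filter, mem_univ, true_and] at hi
    simp [← hi]

theorem sum_eq_sum_filter_false_add_sum_filter_true {ι M : Type*} [Fintype ι] [DecidableEq ι]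
    [AddCommMonoid M] (f : (ι → Bool) → M) (t : ι) :
    ∑ i, f i = ∑ i ∈ univ.filter (fun i => i t = false), f i
      + ∑ i ∈ univ.filter (fun i => i t = true), f i := by
  rw [← sum_fiberwise univ (fun i => i t) f, Fintype.sum_bool, add_comm]

theorem systematic_half_split_general (K : ℕ) (p q : ℝ)
    (y : Fin K → Bool) (t : Fin K) :
    (∑ i ∈ Finset.univ.filter (fun i : Fin K → Bool => i t = false),
        ∏ s ∈ Finset.univ.filter (fun s : Fin K => (s : ℕ) < (t : ℕ)),
          (if i s = y s then q else p))
      = (1/2) * ∑ i : Fin K → Bool,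
          ∏ s ∈ Finset.univ.filter (fun s : Fin K => (s : ℕ) < (t : ℕ)),
            (if i s = y s then q else p) ∧
    (∑ i ∈ Finset.univ.filter (fun i : Fin K → Bool => i t = true),
        ∏ s ∈ Finset.univ.filter (fun s : Fin K => (s : ℕ) < (t : ℕ)),
          (if i s = y s then q else p))
      = (1/2) * ∑ i : Fin K → Bool,
          ∏ s ∈ Finset.univ.filter (fun s : Fin K => (s : ℕ) < (t : ℕ)),
            (if i s = y s then q else p) ∧
    (∀ θ : Fin K → Bool,
      (θ ∈ Finset.univ.filter (fun i : Fin K → Bool => i t = true)) ↔ θ t = true) := by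
  set w : (Fin K → Bool) → ℝ := fun i =>
    ∏ s ∈ univ.filter (fun s : Fin K => (s : ℕ) < (t : ℕ)), if i s = y s then q else p
  have hw : ∀ i c, w (Function.update i t c) = w i := fun i c =>
    prod_update_eq_of_notMem _ i (fun s b => if b = y s then q else p) (by simp) c
  have hflip := sum_filter_apply_eq_of_update_invariant w t hw false true
  have htotal := sum_eq_sum_filter_false_add_sum_filter_true w t
  exact ⟨by linarith, by linarith, fun θ => by simp⟩

/-- Systematic transmission over the BSC with bit-`t` partitioning:
after conditioning on any received symbols `y` for the earlier bits, the
(unnormalized) posterior mass of `S₀ = {i : i t = false}` and of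
`S₁ = {i : i t = true}` are each exactly half of the total; and the
transmitted symbol at time `t` is bit `t` of the message. -/
theorem systematic_half_split (K : ℕ) (p q : ℝ)
    (hp0 : 0 < p) (hp2 : p < 1/2) (hq : q = 1 - p)
    (y : Fin K → Bool) (t : Fin K) :
    (∑ i ∈ Finset.univ.filter (fun i : Fin K → Bool => i t = false),
        ∏ s ∈ Finset.univ.filter (fun s : Fin K => (s : ℕ) < (t : ℕ)),
          (if i s = y s then q else p))
      = (1/2) * ∑ i : Fin K → Bool,
          ∏ s ∈ Finset.univ.filter (fun s : Fin K => (s : ℕ) < (t : ℕ)),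
            (if i s = y s then q else p) ∧
    (∑ i ∈ Finset.univ.filter (fun i : Fin K → Bool => i t = true),
        ∏ s ∈ Finset.univ.filter (fun s : Fin K => (s : ℕ) < (t : ℕ)),
          (if i s = y s then q else p))
      = (1/2) * ∑ i : Fin K → Bool,
          ∏ s ∈ Finset.univ.filter (fun s : Fin K => (s : ℕ) < (t : ℕ)),
            (if i s = y s then q else p) ∧
    (∀ θ : Fin K → Bool,
      (θ ∈ Finset.univ.filter (fun i : Fin K → Bool => i t = true)) ↔ θ t = true) :=
  systematic_half_split_general K p q y t
end
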